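/- arXiv:math/0509669 — 5 statements merged into one kernel-verified Lean document; each statement's English description precedes it below -/
import Mathlib

section
/- Let {ℓ^1,…,ℓ^k} be a set of generators of the ideal I_{S,p} of germs vanishing on S at p. Then for every h ∈ I_{S,p}, the f-order of vanishing satisfies ν_f(h;p) ≥ min{ν_f(ℓ^1;p),…,ν_f(ℓ^k;p), ν_f + 1}. In particular, f is tangential at p (i.e. min{ν_f(h;p) : h ∈ I_{S,p}} > ν_f) if and only if min{ν_f(ℓ^1;p),…,ν_f(ℓ^k;p)} > ν_f. -/
/-!
STATEMENT 2.  `R` is the ring `O_{M,p}` of germs at `p`, `I = I_{S,p}` the ideal of germs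
vanishing on `S`, generated by `ℓ^1, …, ℓ^k` (`hgen`), and `F : R →+* R` is `h ↦ h ∘ f`.
`ν` is the order of contact of `f` with `S`, so `F h - h ∈ I ^ ν` for every germ `h`
(`hν`), and `ν_f(ℓ^j;p) = νℓ j` is recorded by `hℓ`.  First conclusion: for every
`h ∈ I`, `ν_f(h;p) ≥ min {νℓ 1, …, νℓ k, ν + 1}`, i.e. `F h - h ∈ I ^ μ` whenever
`μ ≤ νℓ j` for all `j` and `μ ≤ ν + 1`.  Second conclusion: `f` is tangential at `p`
(every `h ∈ I` has `ν_f(h;p) > ν`, i.e. `F h - h ∈ I ^ (ν+1)`) if and only if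
`min_j ν_f(ℓ^j;p) > ν`, i.e. `F (ℓ j) - ℓ j ∈ I ^ (ν+1)` for every `j`.
-/
theorem key {R : Type*} [CommRing R] (I : Ideal R) (F : R →+* R)
    {k : ℕ} (ℓ : Fin k → R) (hgen : I = Ideal.span (Set.range ℓ))
    (ν : ℕ) (hν : ∀ h : R, F h - h ∈ I ^ ν)
    (μ : ℕ) (hμ : μ ≤ ν + 1) (hℓμ : ∀ j, F (ℓ j) - ℓ j ∈ I ^ μ) :
    ∀ h ∈ I, F h - h ∈ I ^ μ := by
  intro h hh
  rw [hgen] at hh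
  induction hh using Submodule.span_induction with
  | mem x hx => obtain ⟨j, rfl⟩ := hx; exact hℓμ j
  | zero => simp
  | add x y hx hy px py =>
      have : F (x + y) - (x + y) = (F x - x) + (F y - y) := by
        rw [map_add]; ring
      rw [this]; exact (I ^ μ).add_mem px py
  | smul a x hx px =>
      have hx' : x ∈ I := by rw [hgen]; exact hx
      have : F (a • x) - a • x = F a * (F x - x) + (F a - a) * x := by
        simp only [smul_eq_mul, map_mul]; ring
      rw [this]
      refine (I ^ μ).add_mem (Ideal.mul_mem_left _ _ px) ?_
      have : (F a - a) * x ∈ I ^ (ν + 1) := by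
        rw [pow_succ]; exact Ideal.mul_mem_mul (hν a) hx'
      exact Ideal.pow_le_pow_right hμ this

theorem statement_2 {R : Type*} [CommRing R] (I : Ideal R) (F : R →+* R)
    {k : ℕ} (ℓ : Fin k → R) (hgen : I = Ideal.span (Set.range ℓ))
    (ν : ℕ) (hν : ∀ h : R, F h - h ∈ I ^ ν)
    (νℓ : Fin k → ℕ)
    (hℓ : ∀ j, F (ℓ j) - ℓ j ∈ I ^ νℓ j ∧ F (ℓ j) - ℓ j ∉ I ^ (νℓ j + 1)) :
    (∀ h ∈ I, ∀ μ : ℕ, (∀ j, μ ≤ νℓ j) → μ ≤ ν + 1 → F h - h ∈ I ^ μ) ∧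
    ((∀ h ∈ I, F h - h ∈ I ^ (ν + 1)) ↔ ∀ j, F (ℓ j) - ℓ j ∈ I ^ (ν + 1)) := by
  constructor
  · intro h hh μ hμℓ hμν
    exact key I F ℓ hgen ν hν μ hμν
      (fun j => Ideal.pow_le_pow_right (hμℓ j) (hℓ j).1) h hh
  · constructor
    · intro H j
      exact H (ℓ j) (hgen ▸ Ideal.subset_span ⟨j, rfl⟩)
    · intro H
      exact key I F ℓ hgen ν hν (ν + 1) le_rfl H
end

section
/- A complex submanifold S of codimension m in an n-dimensional complex manifold M splits into M (i.e. the exact sequence O → TS → TM|_S → N_S → O of vector bundles splits) if and only if there is an atlas {(Û_α, ẑ_α)} of M adapted to S such that ∂ẑ^p_β/∂ẑ^r_α vanishes identically on S for all r = 1,…,m, p = m+1,…,n, and all pairs of indices α, β. -/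
open Filter Topology

abbrev Esp (n : ℕ) := Fin n → ℂ

/-- The model of the codimension-`m` submanifold in a chart: `{z¹ = ⋯ = z^m = 0}`. -/
def sliceSet (n m : ℕ) : Set (Esp n) := {x | ∀ r : Fin n, (r : ℕ) < m → x r = 0}

/-- The transition from the chart `e` to the chart `e'` is holomorphic. -/
def IsHoloCompat {n : ℕ} {M : Type*} [TopologicalSpace M]
    (e e' : OpenPartialHomeomorph M (Esp n)) : Prop :=
  AnalyticOnNhd ℂ (↑e' ∘ e.symm) (e.target ∩ e.symm ⁻¹' e'.source)

/-- A chart of `M` adapted to `S`: holomorphically compatible with the complex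
structure, and mapping `S` to the model slice `{z¹ = ⋯ = z^m = 0}`. -/
def IsAdaptedChart (n m : ℕ) {M : Type*} [TopologicalSpace M]
    [ChartedSpace (Esp n) M] (S : Set M) (e : OpenPartialHomeomorph M (Esp n)) : Prop :=
  (∀ c ∈ atlas (Esp n) M, IsHoloCompat e c ∧ IsHoloCompat c e) ∧
  e.source ∩ S = e.source ∩ ↑e ⁻¹' sliceSet n m

/-- An atlas of `M` adapted to `S`. -/
def IsAdaptedAtlas (n m : ℕ) {M : Type*} [TopologicalSpace M]
    [ChartedSpace (Esp n) M] (S : Set M)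
    (A : Set (OpenPartialHomeomorph M (Esp n))) : Prop :=
  (∀ e ∈ A, IsAdaptedChart n m S e) ∧ (∀ x : M, ∃ e ∈ A, x ∈ e.source) ∧
  (∀ e ∈ A, ∀ e' ∈ A, IsHoloCompat e e')

/-- `S` splits into `M`: the extension `O → TS → TM|_S → N_S → O` splits, i.e. there is
a holomorphic bundle morphism `σ : N_S → TM|_S` with `π ∘ σ = id`.  In the local frames
provided by an adapted atlas, `σ` is a family of linear maps `σ_e(z) : ℂⁿ → ℂⁿ`
depending only on the normal components of the argument (so defined on `N_S`), which is
a right inverse of the projection to the normal components (`π ∘ σ = id`), holomorphic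
along `S`, and compatible with the Jacobians of the transition maps. -/
def SplitsInto (n m : ℕ) {M : Type*} [TopologicalSpace M]
    [ChartedSpace (Esp n) M] (S : Set M) : Prop :=
  ∃ A : Set (OpenPartialHomeomorph M (Esp n)), IsAdaptedAtlas n m S A ∧
    ∃ σ : OpenPartialHomeomorph M (Esp n) → Esp n → (Esp n →ₗ[ℂ] Esp n),
      (∀ e ∈ A, ∀ z : Esp n, ∀ v w : Esp n,
        (∀ r : Fin n, (r : ℕ) < m → v r = w r) → σ e z v = σ e z w) ∧
      (∀ e ∈ A, ∀ z ∈ e.target ∩ sliceSet n m, ∀ v : Esp n,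
        ∀ r : Fin n, (r : ℕ) < m → σ e z v r = v r) ∧
      (∀ e ∈ A, ∀ v : Esp n, ∃ F : Esp n → Esp n,
        AnalyticOnNhd ℂ F e.target ∧ ∀ z ∈ e.target ∩ sliceSet n m, F z = σ e z v) ∧
      (∀ e ∈ A, ∀ e' ∈ A, ∀ z ∈ e.target ∩ sliceSet n m, e.symm z ∈ e'.source →
        ∀ v : Esp n,
          σ e' (e' (e.symm z)) ((fderiv ℂ (↑e' ∘ e.symm) z) v) =
            (fderiv ℂ (↑e' ∘ e.symm) z) (σ e z v))

/-!
If along `S` every transition Jacobian sends the normal directions `∂/∂z^r` (`r < m`) into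
normal directions, the coordinate projection onto the normal directions commutes with all
Jacobians, so it is a global splitting `σ(∂_r) = ∂_r`.

Conversely, let `σ` be a splitting. In a chart, extend the tangential parts `a_r` of
`σ(∂_r) = ∂_r + a_r` holomorphically off `S` and shear the chart by
`w = z - ∑_{r < m} z^r a_r(z)`. The shear fixes `S` and the normal coordinates, and its
differential along `S` is unipotent, hence it is a local biholomorphism in which
`σ(∂/∂w^r) = ∂/∂w^r`. Since `σ` commutes with the Jacobians, the Jacobians of the sheared
charts map normal directions to normal directions.
-/

open Set

section Slice

variable {n m : ℕ}

lemma isClosed_sliceSet (n m : ℕ) : IsClosed (sliceSet n m) := by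
  simp only [sliceSet, ofPred_forall]
  exact isClosed_iInter fun r => isClosed_iInter fun _ =>
    isClosed_eq (continuous_apply r) continuous_const

lemma mem_sliceSet_congr {u v : Esp n} (h : ∀ r : Fin n, (r : ℕ) < m → u r = v r) :
    u ∈ sliceSet n m ↔ v ∈ sliceSet n m :=
  forall₂_congr fun r hr => by rw [h r hr]

def normalIndices (n m : ℕ) : Finset (Fin n) := Finset.univ.filter fun r => (r : ℕ) < m

@[simp]
lemma mem_normalIndices {r : Fin n} : r ∈ normalIndices n m ↔ (r : ℕ) < m := by
  simp [normalIndices]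

noncomputable def normalProj (n m : ℕ) : Esp n →L[ℂ] Esp n :=
  ContinuousLinearMap.pi fun j => if (j : ℕ) < m then ContinuousLinearMap.proj j else 0

lemma normalProj_apply (v : Esp n) (j : Fin n) :
    normalProj n m v j = if (j : ℕ) < m then v j else 0 := by
  unfold normalProj
  split_ifs <;> simp [*]

lemma normalProj_congr {u v : Esp n} (h : ∀ r : Fin n, (r : ℕ) < m → u r = v r) :
    normalProj n m u = normalProj n m v := by
  ext j
  simp only [normalProj_apply]
  split_ifs with hj
  exacts [h j hj, rfl]

lemma normalProj_eq_sum (v : Esp n) :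
    normalProj n m v = ∑ s ∈ normalIndices n m, v s • (Pi.single s 1 : Esp n) := by
  ext j
  simp [normalProj_apply, Finset.sum_apply, Pi.single_apply]

lemma normalProj_single {r : Fin n} (hr : (r : ℕ) < m) :
    normalProj n m (Pi.single r 1) = Pi.single r 1 := by
  simp [normalProj_eq_sum, Pi.single_apply, hr]

lemma sub_normalProj_mem_sliceSet (v : Esp n) : v - normalProj n m v ∈ sliceSet n m := by
  intro r hr
  simp [normalProj_apply, hr]

lemma map_eq_normalProj_of_normal {L : Esp n →ₗ[ℂ] Esp n}
    (hL : ∀ v w : Esp n, (∀ r : Fin n, (r : ℕ) < m → v r = w r) → L v = L w)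
    {P : Esp n →L[ℂ] Esp n}
    (hP : ∀ s : Fin n, (s : ℕ) < m → P (L (Pi.single s 1)) = Pi.single s 1) (u : Esp n) :
    P (L u) = normalProj n m u := by
  have hu : L u = L (normalProj n m u) := hL _ _ fun r hr => by simp [normalProj_apply, hr]
  rw [hu, normalProj_eq_sum, map_sum, map_sum]
  exact Finset.sum_congr rfl fun s hs => by
    rw [map_smul, map_smul, hP s (mem_normalIndices.mp hs)]

end Slice

section Adapted

variable {n m : ℕ} {M : Type*} [TopologicalSpace M] [ChartedSpace (Esp n) M] {S : Set M}
  {e e' : OpenPartialHomeomorph M (Esp n)}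

lemma IsAdaptedChart.mem_iff (he : IsAdaptedChart n m S e) {x : M} (hx : x ∈ e.source) :
    x ∈ S ↔ e x ∈ sliceSet n m := by
  simpa [hx] using Set.ext_iff.mp he.2 x

lemma IsAdaptedChart.symm_mem_iff (he : IsAdaptedChart n m S e) {z : Esp n}
    (hz : z ∈ e.target) : e.symm z ∈ S ↔ z ∈ sliceSet n m := by
  rw [he.mem_iff (e.map_target hz), e.right_inv hz]

lemma mapsTo_transition_sliceSet (he : IsAdaptedChart n m S e) (he' : IsAdaptedChart n m S e') :
    MapsTo (e' ∘ e.symm) (e.target ∩ e.symm ⁻¹' e'.source ∩ sliceSet n m) (sliceSet n m) :=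
  fun _ ⟨⟨hzt, hze'⟩, hzs⟩ => (he'.mem_iff hze').mp ((he.symm_mem_iff hzt).mpr hzs)

end Adapted

section Compat

variable {n m : ℕ} {M : Type*} [TopologicalSpace M]

lemma IsHoloCompat.trans_trans {e e' : OpenPartialHomeomorph M (Esp n)}
    {φ φ' : OpenPartialHomeomorph (Esp n) (Esp n)} (h : IsHoloCompat e e')
    (hφ : AnalyticOnNhd ℂ φ.symm φ.target) (hφ' : AnalyticOnNhd ℂ φ' φ'.source) :
    IsHoloCompat (e.trans φ) (e'.trans φ') := by
  rintro z ⟨⟨hzφ, hze⟩, hze', hzφ'⟩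
  exact (hφ' _ hzφ').comp (f := (e' ∘ e.symm) ∘ φ.symm) ((h _ ⟨hze, hze'⟩).comp (hφ z hzφ))

lemma IsAdaptedChart.trans [ChartedSpace (Esp n) M] {S : Set M}
    {e : OpenPartialHomeomorph M (Esp n)} {φ : OpenPartialHomeomorph (Esp n) (Esp n)}
    (he : IsAdaptedChart n m S e) (hφ : AnalyticOnNhd ℂ φ φ.source)
    (hφsymm : AnalyticOnNhd ℂ φ.symm φ.target)
    (hnormal : ∀ z ∈ φ.source, ∀ r : Fin n, (r : ℕ) < m → φ z r = z r) :
    IsAdaptedChart n m S (e.trans φ) := by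
  refine ⟨fun c hc => ⟨?_, ?_⟩, ?_⟩
  · simpa using (he.1 c hc).1.trans_trans (φ' := OpenPartialHomeomorph.refl _) hφsymm
      analyticOnNhd_id
  · simpa using (he.1 c hc).2.trans_trans (φ := OpenPartialHomeomorph.refl _) analyticOnNhd_id hφ
  · ext x
    refine and_congr_right fun hx => ?_
    rw [OpenPartialHomeomorph.trans_source] at hx
    exact (he.mem_iff hx.1).trans (mem_sliceSet_congr (hnormal _ hx.2)).symm

end Compat

section Tangent

variable {n m : ℕ}

lemma fderiv_apply_mem_sliceSet {g : Esp n → Esp n} {z t : Esp n} (hz : z ∈ sliceSet n m)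
    (hg : DifferentiableAt ℂ g z) (hslice : ∀ᶠ y in 𝓝 z, y ∈ sliceSet n m → g y ∈ sliceSet n m)
    (ht : t ∈ sliceSet n m) : fderiv ℂ g z t ∈ sliceSet n m := by
  intro s hs
  have hline : HasDerivAt (fun c : ℂ => z + c • t) t 0 := by
    simpa using ((hasDerivAt_id (0 : ℂ)).smul_const t).const_add z
  have hderiv : HasDerivAt (fun c : ℂ => g (z + c • t) s) (fderiv ℂ g z t s) 0 := by
    have hg' : HasFDerivAt g (fderiv ℂ g z) (z + (0 : ℂ) • t) := by
      simpa using hg.hasFDerivAt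
    exact hasDerivAt_pi.mp (hg'.comp_hasDerivAt 0 hline) s
  have hzero : (fun c : ℂ => g (z + c • t) s) =ᶠ[𝓝 0] fun _ => 0 := by
    have hline_tendsto : Tendsto (fun c : ℂ => z + c • t) (𝓝 0) (𝓝 z) := by
      simpa using hline.continuousAt.tendsto
    filter_upwards [hline_tendsto.eventually hslice] with c hc
    exact hc (fun r hr => by simp [hz r hr, ht r hr]) s hs
  exact hderiv.unique ((hasDerivAt_const (0 : ℂ) (0 : ℂ)).congr_of_eventuallyEq hzero)

lemma normalProj_fderiv_comm {g : Esp n → Esp n} {z : Esp n} (hz : z ∈ sliceSet n m)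
    (hg : DifferentiableAt ℂ g z) (hslice : ∀ᶠ y in 𝓝 z, y ∈ sliceSet n m → g y ∈ sliceSet n m)
    (hblock : ∀ r p : Fin n, (r : ℕ) < m → m ≤ (p : ℕ) → fderiv ℂ g z (Pi.single r 1) p = 0)
    (v : Esp n) : normalProj n m (fderiv ℂ g z v) = fderiv ℂ g z (normalProj n m v) := by
  ext j
  rw [normalProj_apply]
  split_ifs with hj
  · have htangent := fderiv_apply_mem_sliceSet hz hg hslice (sub_normalProj_mem_sliceSet v) j hj
    rw [map_sub, Pi.sub_apply, sub_eq_zero] at htangent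
    exact htangent
  · rw [normalProj_eq_sum, map_sum, Finset.sum_apply]
    refine (Finset.sum_eq_zero fun s hs => ?_).symm
    rw [map_smul, Pi.smul_apply, hblock s j (mem_normalIndices.mp hs) (not_lt.mp hj), smul_zero]

end Tangent

open scoped ContDiff in
theorem AnalyticOnNhd.exists_openPartialHomeomorph {𝕜 E F : Type*} [RCLike 𝕜]
    [NormedAddCommGroup E] [NormedSpace 𝕜 E] [CompleteSpace E]
    [NormedAddCommGroup F] [NormedSpace 𝕜 F] [CompleteSpace F]
    {f : E → F} {U : Set E} (hf : AnalyticOnNhd 𝕜 f U) (hU : IsOpen U) {a : E} (ha : a ∈ U)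
    {f' : E ≃L[𝕜] F} (hf' : HasFDerivAt f (f' : E →L[𝕜] F) a) :
    ∃ φ : OpenPartialHomeomorph E F, ⇑φ = f ∧ a ∈ φ.source ∧ φ.source ⊆ U ∧
      AnalyticOnNhd 𝕜 φ.symm φ.target := by
  let φ₀ := (hf a ha).contDiffAt.toOpenPartialHomeomorph (n := ω) f hf' (by simp)
  have ha₀ : a ∈ φ₀.source := (hf a ha).contDiffAt.mem_toOpenPartialHomeomorph_source hf' _
  obtain ⟨V, hV, hVo, haV⟩ := eventually_nhds_iff.mp
    (φ₀.analyticAt_symm' ha₀ (hf a ha) hf'.fderiv).eventually_analyticAt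
  refine ⟨φ₀.restrOpen (U ∩ f ⁻¹' V) (hf.continuousOn.isOpen_inter_preimage hU hVo), rfl,
    ⟨ha₀, ha, haV⟩, fun x hx => hx.2.1, fun y ⟨hy, _, hyV⟩ => hV y ?_⟩
  rwa [← φ₀.right_inv hy]

section Shear

variable {n m : ℕ}

noncomputable def tangentProj (n m : ℕ) : Esp n →L[ℂ] Esp n :=
  ContinuousLinearMap.id ℂ (Esp n) - normalProj n m

lemma tangentProj_apply (v : Esp n) : tangentProj n m v = v - normalProj n m v := rfl

noncomputable def shearCLM (n m : ℕ) (F : Fin n → Esp n → Esp n) (w : Esp n) :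
    Esp n →L[ℂ] Esp n :=
  ∑ r ∈ normalIndices n m, (ContinuousLinearMap.proj r).smulRight (tangentProj n m (F r w))

noncomputable def shearMap (n m : ℕ) (F : Fin n → Esp n → Esp n) (z : Esp n) : Esp n :=
  z - ∑ r ∈ normalIndices n m, z r • tangentProj n m (F r z)

variable (F : Fin n → Esp n → Esp n)

lemma shearCLM_apply (w v : Esp n) :
    shearCLM n m F w v = ∑ r ∈ normalIndices n m, v r • tangentProj n m (F r w) := by
  simp [shearCLM]

lemma shearMap_eq (z : Esp n) : shearMap n m F z = z - shearCLM n m F z z := by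
  rw [shearMap, shearCLM_apply]

lemma shearCLM_apply_mem_sliceSet (w v : Esp n) : shearCLM n m F w v ∈ sliceSet n m := by
  intro j hj
  simp only [shearCLM_apply, Finset.sum_apply, Pi.smul_apply, tangentProj_apply]
  exact Finset.sum_eq_zero fun r _ => by
    rw [sub_normalProj_mem_sliceSet _ j hj, smul_zero]

lemma shearCLM_apply_of_mem_sliceSet (w : Esp n) {v : Esp n} (hv : v ∈ sliceSet n m) :
    shearCLM n m F w v = 0 := by
  rw [shearCLM_apply]
  exact Finset.sum_eq_zero fun r hr => by rw [hv r (mem_normalIndices.mp hr), zero_smul]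

lemma shearMap_apply_normal (z : Esp n) {r : Fin n} (hr : (r : ℕ) < m) :
    shearMap n m F z r = z r := by
  rw [shearMap_eq, Pi.sub_apply, shearCLM_apply_mem_sliceSet F z z r hr, sub_zero]

lemma shearMap_of_mem_sliceSet {z : Esp n} (hz : z ∈ sliceSet n m) : shearMap n m F z = z := by
  rw [shearMap_eq, shearCLM_apply_of_mem_sliceSet F z hz, sub_zero]

lemma analyticOnNhd_shearMap {U : Set (Esp n)} (hF : ∀ r, AnalyticOnNhd ℂ (F r) U) :
    AnalyticOnNhd ℂ (shearMap n m F) U := fun z hz =>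
  analyticAt_id.sub <| Finset.analyticAt_fun_sum _ fun r _ =>
    ((ContinuousLinearMap.proj r).analyticAt z).smul
      (((tangentProj n m).analyticAt _).comp (hF r z hz))

lemma hasFDerivAt_shearMap {w : Esp n} (hF : ∀ r, DifferentiableAt ℂ (F r) w)
    (hw : w ∈ sliceSet n m) :
    HasFDerivAt (shearMap n m F) (ContinuousLinearMap.id ℂ (Esp n) - shearCLM n m F w) w := by
  refine (hasFDerivAt_id w).sub (HasFDerivAt.fun_sum fun r hr => ?_)
  have hterm := ((ContinuousLinearMap.proj (R := ℂ) (φ := fun _ : Fin n => ℂ) r).hasFDerivAt).smul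
    ((tangentProj n m).hasFDerivAt.comp w (hF r).hasFDerivAt)
  simpa [hw r (mem_normalIndices.mp hr)] using hterm

/-- The inverse is `1 + shearCLM n m F w`, as `shearCLM n m F w` squares to zero. -/
noncomputable def shearEquiv (n m : ℕ) (F : Fin n → Esp n → Esp n) (w : Esp n) :
    Esp n ≃L[ℂ] Esp n :=
  .equivOfInverse (ContinuousLinearMap.id ℂ (Esp n) - shearCLM n m F w)
    (ContinuousLinearMap.id ℂ (Esp n) + shearCLM n m F w)
    (fun v => by
      simp [shearCLM_apply_of_mem_sliceSet F w (shearCLM_apply_mem_sliceSet F w v)])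
    (fun v => by
      simp [shearCLM_apply_of_mem_sliceSet F w (shearCLM_apply_mem_sliceSet F w v)])

lemma shearEquiv_symm_single {w : Esp n} {r : Fin n} (hr : (r : ℕ) < m)
    (hnormal : normalProj n m (F r w) = Pi.single r 1) :
    (shearEquiv n m F w).symm (Pi.single r 1) = F r w := by
  simp [shearEquiv, shearCLM_apply, Pi.single_apply, hr, tangentProj_apply, hnormal]

end Shear

section Straightening

variable {n m : ℕ}

/-- Composing a chart with such a `φ` turns the splitting `τ` into the standard one,
`∂_r ↦ ∂_r`. -/
structure IsStraightening (n m : ℕ) (τ : Esp n → Esp n →ₗ[ℂ] Esp n)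
    (φ : OpenPartialHomeomorph (Esp n) (Esp n)) : Prop where
  analyticOnNhd : AnalyticOnNhd ℂ φ φ.source
  analyticOnNhd_symm : AnalyticOnNhd ℂ φ.symm φ.target
  apply_normal : ∀ z ∈ φ.source, ∀ r : Fin n, (r : ℕ) < m → φ z r = z r
  apply_of_mem_sliceSet : ∀ z ∈ φ.source ∩ sliceSet n m, φ z = z
  fderiv_symm_single : ∀ z ∈ φ.target ∩ sliceSet n m, ∀ r : Fin n, (r : ℕ) < m →
    fderiv ℂ φ.symm z (Pi.single r 1) = τ z (Pi.single r 1)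
  fderiv_apply_single : ∀ w ∈ φ.source ∩ sliceSet n m, ∀ s : Fin n, (s : ℕ) < m →
    fderiv ℂ φ w (τ w (Pi.single s 1)) = Pi.single s 1

lemma OpenPartialHomeomorph.symm_apply_of_mem_sliceSet
    {φ : OpenPartialHomeomorph (Esp n) (Esp n)}
    (hnormal : ∀ z ∈ φ.source, ∀ r : Fin n, (r : ℕ) < m → φ z r = z r)
    (hfix : ∀ z ∈ φ.source ∩ sliceSet n m, φ z = z) {z : Esp n}
    (hz : z ∈ φ.target ∩ sliceSet n m) : φ.symm z = z := by
  have hsrc := φ.map_target hz.1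
  have hslice : φ.symm z ∈ sliceSet n m := by
    refine (mem_sliceSet_congr (hnormal _ hsrc)).mp ?_
    rw [φ.right_inv hz.1]
    exact hz.2
  rw [← hfix _ ⟨hsrc, hslice⟩, φ.right_inv hz.1]

lemma IsStraightening.symm_apply_of_mem_sliceSet {τ : Esp n → Esp n →ₗ[ℂ] Esp n}
    {φ : OpenPartialHomeomorph (Esp n) (Esp n)} (hφ : IsStraightening n m τ φ) {z : Esp n}
    (hz : z ∈ φ.target ∩ sliceSet n m) :
    φ.symm z = z :=
  OpenPartialHomeomorph.symm_apply_of_mem_sliceSet hφ.apply_normal hφ.apply_of_mem_sliceSet hz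

lemma isStraightening_ofSet_compl (τ : Esp n → Esp n →ₗ[ℂ] Esp n) :
    IsStraightening n m τ (.ofSet (sliceSet n m)ᶜ (isClosed_sliceSet n m).isOpen_compl) where
  analyticOnNhd := analyticOnNhd_id
  analyticOnNhd_symm := analyticOnNhd_id
  apply_normal _ _ _ _ := rfl
  apply_of_mem_sliceSet _ _ := rfl
  fderiv_symm_single _ hz := absurd hz.2 hz.1
  fderiv_apply_single _ hw := absurd hw.2 hw.1

lemma isStraightening_of_hasFDerivAt {U : Set (Esp n)} {τ : Esp n → Esp n →ₗ[ℂ] Esp n}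
    {φ : OpenPartialHomeomorph (Esp n) (Esp n)} {D : Esp n → Esp n ≃L[ℂ] Esp n}
    (hsrc : φ.source ⊆ U) (hφ : AnalyticOnNhd ℂ φ U) (hφsymm : AnalyticOnNhd ℂ φ.symm φ.target)
    (hnormal : ∀ z ∈ φ.source, ∀ r : Fin n, (r : ℕ) < m → φ z r = z r)
    (hfix : ∀ z ∈ φ.source ∩ sliceSet n m, φ z = z)
    (hD : ∀ w ∈ U ∩ sliceSet n m, HasFDerivAt φ (D w : Esp n →L[ℂ] Esp n) w)
    (hDτ : ∀ w ∈ U ∩ sliceSet n m, ∀ r : Fin n, (r : ℕ) < m →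
      (D w).symm (Pi.single r 1) = τ w (Pi.single r 1)) :
    IsStraightening n m τ φ where
  analyticOnNhd := hφ.mono hsrc
  analyticOnNhd_symm := hφsymm
  apply_normal := hnormal
  apply_of_mem_sliceSet := hfix
  fderiv_symm_single z hz r hr := by
    have hsymm := OpenPartialHomeomorph.symm_apply_of_mem_sliceSet hnormal hfix hz
    have hzU : z ∈ U := hsrc (hsymm ▸ φ.map_target hz.1)
    have hD_symm : HasFDerivAt φ (D z : Esp n →L[ℂ] Esp n) (φ.symm z) := by
      rw [hsymm]
      exact hD z ⟨hzU, hz.2⟩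
    have hderiv := φ.hasFDerivAt_symm hz.1 hD_symm
    rw [hderiv.fderiv, ContinuousLinearEquiv.coe_coe, hDτ z ⟨hzU, hz.2⟩ r hr]
  fderiv_apply_single w hw s hs := by
    have hwU : w ∈ U ∩ sliceSet n m := ⟨hsrc hw.1, hw.2⟩
    rw [(hD w hwU).fderiv, ← hDτ w hwU s hs, ContinuousLinearEquiv.coe_coe,
      ContinuousLinearEquiv.apply_symm_apply]

lemma exists_isStraightening_mem_source {U : Set (Esp n)} (hU : IsOpen U)
    {τ : Esp n → Esp n →ₗ[ℂ] Esp n}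
    (hτ : ∀ z ∈ U ∩ sliceSet n m, ∀ v : Esp n, ∀ r : Fin n, (r : ℕ) < m → τ z v r = v r)
    (hext : ∀ v : Esp n, ∃ F : Esp n → Esp n,
      AnalyticOnNhd ℂ F U ∧ ∀ z ∈ U ∩ sliceSet n m, F z = τ z v)
    {z₀ : Esp n} (hz₀ : z₀ ∈ U) :
    ∃ φ : OpenPartialHomeomorph (Esp n) (Esp n), IsStraightening n m τ φ ∧ z₀ ∈ φ.source := by
  by_cases hz₀s : z₀ ∈ sliceSet n m
  swap
  · exact ⟨_, isStraightening_ofSet_compl τ, hz₀s⟩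
  choose F hFa hFτ using fun r : Fin n => hext (Pi.single r 1)
  have hΦ : AnalyticOnNhd ℂ (shearMap n m F) U := analyticOnNhd_shearMap F hFa
  have hD : ∀ w ∈ U ∩ sliceSet n m,
      HasFDerivAt (shearMap n m F) (shearEquiv n m F w : Esp n →L[ℂ] Esp n) w :=
    fun w hw => hasFDerivAt_shearMap F (fun r => (hFa r w hw.1).differentiableAt) hw.2
  obtain ⟨φ, hφ, hz₀φ, hsrc, hsymm⟩ := hΦ.exists_openPartialHomeomorph hU hz₀ (hD z₀ ⟨hz₀, hz₀s⟩)
  rw [← hφ] at hΦ hD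
  refine ⟨φ, isStraightening_of_hasFDerivAt hsrc hΦ hsymm ?_ ?_ hD ?_, hz₀φ⟩
  · intro z _ r hr
    rw [hφ]
    exact shearMap_apply_normal F z hr
  · intro z hz
    rw [hφ]
    exact shearMap_of_mem_sliceSet F hz.2
  · intro w hw r hr
    have hnormal : normalProj n m (F r w) = Pi.single r 1 := by
      rw [hFτ r w hw, normalProj_congr (hτ w hw _), normalProj_single hr]
    rw [shearEquiv_symm_single F hr hnormal, hFτ r w hw]

lemma fderiv_comp_straightening_single {τ τ' : Esp n → Esp n →ₗ[ℂ] Esp n}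
    {φ φ' : OpenPartialHomeomorph (Esp n) (Esp n)} (hφ : IsStraightening n m τ φ)
    (hφ' : IsStraightening n m τ' φ') {g : Esp n → Esp n} {z : Esp n}
    (hz : z ∈ φ.target ∩ sliceSet n m) (hgz : g z ∈ φ'.source ∩ sliceSet n m)
    (hg : DifferentiableAt ℂ g z)
    (hτ' : ∀ v w : Esp n, (∀ r : Fin n, (r : ℕ) < m → v r = w r) → τ' (g z) v = τ' (g z) w)
    (hcomm : ∀ v, τ' (g z) (fderiv ℂ g z v) = fderiv ℂ g z (τ z v)) {r : Fin n}
    (hr : (r : ℕ) < m) :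
    fderiv ℂ (φ' ∘ g ∘ φ.symm) z (Pi.single r 1) =
      normalProj n m (fderiv ℂ g z (Pi.single r 1)) := by
  have hsymm : φ.symm z = z := hφ.symm_apply_of_mem_sliceSet hz
  have hφ_symm : HasFDerivAt φ.symm (fderiv ℂ φ.symm z) z :=
    (hφ.analyticOnNhd_symm z hz.1).differentiableAt.hasFDerivAt
  have hg_at : HasFDerivAt g (fderiv ℂ g z) (φ.symm z) := by
    rw [hsymm]
    exact hg.hasFDerivAt
  have hφ'_at : HasFDerivAt φ' (fderiv ℂ φ' (g z)) (g (φ.symm z)) := by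
    rw [hsymm]
    exact (hφ'.analyticOnNhd _ hgz.1).differentiableAt.hasFDerivAt
  rw [(hφ'_at.comp z (hg_at.comp z hφ_symm)).fderiv, ContinuousLinearMap.comp_apply,
    ContinuousLinearMap.comp_apply, hφ.fderiv_symm_single z hz r hr, ← hcomm]
  exact map_eq_normalProj_of_normal hτ' (hφ'.fderiv_apply_single _ hgz) _

end Straightening

section Splitting

variable {n m : ℕ} {M : Type*} [TopologicalSpace M] [ChartedSpace (Esp n) M] {S : Set M}

theorem splitsInto_of_forall_fderiv_single_eq_zero {A : Set (OpenPartialHomeomorph M (Esp n))}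
    (hA : IsAdaptedAtlas n m S A)
    (hblock : ∀ e ∈ A, ∀ e' ∈ A, ∀ z ∈ e.target ∩ sliceSet n m, e.symm z ∈ e'.source →
      ∀ r p : Fin n, (r : ℕ) < m → m ≤ (p : ℕ) →
        (fderiv ℂ (↑e' ∘ e.symm) z (Pi.single r 1)) p = 0) :
    SplitsInto n m S := by
  refine ⟨A, hA, fun _ _ => (normalProj n m : Esp n →ₗ[ℂ] Esp n), ?_, ?_, ?_, ?_⟩
  · exact fun _ _ _ _ _ => normalProj_congr
  · intro _ _ _ _ v r hr
    simp [normalProj_apply, hr]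
  · exact fun _ _ v => ⟨fun _ => normalProj n m v, analyticOnNhd_const, fun _ _ => rfl⟩
  · rintro e he e' he' z ⟨hzt, hzs⟩ hze' v
    have hslice : ∀ᶠ y in 𝓝 z, y ∈ sliceSet n m → (e' ∘ e.symm) y ∈ sliceSet n m := by
      filter_upwards [(e.isOpen_inter_preimage_symm e'.open_source).mem_nhds ⟨hzt, hze'⟩]
        with y hy hys
      exact mapsTo_transition_sliceSet (hA.1 e he) (hA.1 e' he') ⟨hy, hys⟩
    exact normalProj_fderiv_comm hzs (hA.2.2 e he e' he' z ⟨hzt, hze'⟩).differentiableAt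
      hslice (hblock e he e' he' z ⟨hzt, hzs⟩ hze') v

theorem exists_adaptedAtlas_forall_fderiv_single_eq_zero (h : SplitsInto n m S) :
    ∃ A : Set (OpenPartialHomeomorph M (Esp n)), IsAdaptedAtlas n m S A ∧
      ∀ e ∈ A, ∀ e' ∈ A, ∀ z ∈ e.target ∩ sliceSet n m, e.symm z ∈ e'.source →
        ∀ r p : Fin n, (r : ℕ) < m → m ≤ (p : ℕ) →
          (fderiv ℂ (↑e' ∘ e.symm) z (Pi.single r 1)) p = 0 := by
  obtain ⟨A, hA, σ, hσ_normal, hσ_proj, hσ_ext, hσ_comm⟩ := h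
  refine ⟨{c | ∃ e ∈ A, ∃ φ, IsStraightening n m (σ e) φ ∧ c = e.trans φ},
    ⟨?_, fun x => ?_, ?_⟩, ?_⟩
  · rintro _ ⟨e, he, φ, hφ, rfl⟩
    exact (hA.1 e he).trans hφ.analyticOnNhd hφ.analyticOnNhd_symm hφ.apply_normal
  · obtain ⟨e, he, hx⟩ := hA.2.1 x
    obtain ⟨φ, hφ, hxφ⟩ := exists_isStraightening_mem_source e.open_target (hσ_proj e he)
      (hσ_ext e he) (e.map_source hx)
    exact ⟨e.trans φ, ⟨e, he, φ, hφ, rfl⟩, hx, hxφ⟩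
  · rintro _ ⟨e, he, φ, hφ, rfl⟩ _ ⟨e', he', φ', hφ', rfl⟩
    exact (hA.2.2 e he e' he').trans_trans hφ.analyticOnNhd_symm hφ'.analyticOnNhd
  · rintro _ ⟨e, he, φ, hφ, rfl⟩ _ ⟨e', he', φ', hφ', rfl⟩ z ⟨⟨hzφ, hze⟩, hzs⟩ hsrc r p hr hp
    have hsymm : φ.symm z = z := hφ.symm_apply_of_mem_sliceSet ⟨hzφ, hzs⟩
    have hsrc' : e.symm (φ.symm z) ∈ e'.source ∧ e' (e.symm (φ.symm z)) ∈ φ'.source := hsrc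
    rw [mem_preimage, hsymm] at hze
    rw [hsymm] at hsrc'
    obtain ⟨hze', hzφ'⟩ := hsrc'
    have hgz : e' (e.symm z) ∈ sliceSet n m :=
      mapsTo_transition_sliceSet (hA.1 e he) (hA.1 e' he') ⟨⟨hze, hze'⟩, hzs⟩
    have hnormal := fderiv_comp_straightening_single hφ hφ' ⟨hzφ, hzs⟩ ⟨hzφ', hgz⟩
      (hA.2.2 e he e' he' z ⟨hze, hze'⟩).differentiableAt (hσ_normal e' he' _)
      (hσ_comm e he e' he' z ⟨hze, hzs⟩ hze') hr
    change fderiv ℂ (φ' ∘ (e' ∘ e.symm) ∘ φ.symm) z (Pi.single r 1) p = 0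
    rw [hnormal, normalProj_apply, if_neg (not_lt.mpr hp)]

end Splitting

theorem statement_6_general {n m : ℕ}
    {M : Type*} [TopologicalSpace M] [ChartedSpace (Esp n) M] (S : Set M) :
    SplitsInto n m S ↔
      ∃ A : Set (OpenPartialHomeomorph M (Esp n)), IsAdaptedAtlas n m S A ∧
        ∀ e ∈ A, ∀ e' ∈ A, ∀ z ∈ e.target ∩ sliceSet n m, e.symm z ∈ e'.source →
          ∀ r p : Fin n, (r : ℕ) < m → m ≤ (p : ℕ) →
            (fderiv ℂ (↑e' ∘ e.symm) z (Pi.single r 1)) p = 0 :=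
  ⟨exists_adaptedAtlas_forall_fderiv_single_eq_zero,
    fun ⟨_, hA, hblock⟩ => splitsInto_of_forall_fderiv_single_eq_zero hA hblock⟩

theorem statement_6 {n m : ℕ} (hm : 0 < m) (hmn : m < n)
    {M : Type*} [TopologicalSpace M] [ChartedSpace (Esp n) M] (S : Set M)
    (hSne : S.Nonempty)
    (hsub : ∃ A : Set (OpenPartialHomeomorph M (Esp n)), IsAdaptedAtlas n m S A) :
    SplitsInto n m S ↔
      ∃ A : Set (OpenPartialHomeomorph M (Esp n)), IsAdaptedAtlas n m S A ∧
        ∀ e ∈ A, ∀ e' ∈ A, ∀ z ∈ e.target ∩ sliceSet n m, e.symm z ∈ e'.source →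
          ∀ r p : Fin n, (r : ℕ) < m → m ≤ (p : ℕ) →
            (fderiv ℂ (↑e' ∘ e.symm) z (Pi.single r 1)) p = 0 :=
  statement_6_general S
end

section
/- Let S be a smooth complex submanifold of M and f ∈ End(M,S), f ≢ id, with order of contact ν_f. In any chart (U,z) adapted to S write f^j − z^j = z^{r_1}⋯z^{r_{ν_f}} g^j_{r_1…r_{ν_f}} with symmetric coefficients not all vanishing on S. Then the local expressions g^h_{s_1…s_{ν_f}}|_S · ∂/∂z^h ⊗ ω^{s_1} ⊗ ⋯ ⊗ ω^{s_{ν_f}} glue to a globally well-defined holomorphic section X_f of TM|_S ⊗ (N_S^*)^{⊗ν_f} (the canonical section associated to f). -/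
open Filter Topology

/-!
Along the complex line `t ↦ p + t v` through `p ∈ S`, `(f − id)/t^ν` tends to `g(p)(v, …, v)`,
since the normal coordinates of `p + t v` are `t v'`. Through the chart `φ` the same curve has
normal coordinates `t dφ_p(v)' + o(t)`, and `f − id = ψ ∘ f̂ ∘ φ − ψ ∘ φ` equals
`dψ(f̂ − id) + o(t^ν)` by strict differentiability of `ψ`, so the limit is also
`dψ(ĝ(φ p)(dφ_p v, …, dφ_p v))`. Both sides are homogeneous polynomials of degree `ν` in `v'`
with symmetric coefficients, and such coefficients are determined by the polynomial.
-/

open Asymptotics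

section Polarization

variable {R ι σ : Type*} [Fintype ι]

theorem exists_perm_eq_comp_of_sum_single_eq {κ κ₀ : ι → σ}
    (h : ∑ i, Finsupp.single (κ i) (1 : ℕ) = ∑ i, Finsupp.single (κ₀ i) 1) :
    ∃ τ : Equiv.Perm ι, κ = κ₀ ∘ τ := by
  classical
  have hcard (s : σ) : Fintype.card {i // κ i = s} = Fintype.card {i // κ₀ i = s} := by
    have hs := DFunLike.congr_fun h s
    simp only [Finsupp.finsetSum_apply, Finsupp.single_apply] at hs
    simpa only [Fintype.card_subtype, Finset.card_filter, eq_comm] using hs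
  let τ : Equiv.Perm ι := Equiv.ofFiberEquiv fun s => Fintype.equivOfCardEq (hcard s)
  exact ⟨τ, funext fun i => (Equiv.ofFiberEquiv_map _ i).symm⟩

variable [DecidableEq ι] [Fintype σ] [CommRing R] [IsDomain R] [Infinite R] [CharZero R]

theorem eq_zero_of_forall_sum_prod_mul_eq_zero {d : (ι → σ) → R}
    (hd : ∀ κ (τ : Equiv.Perm ι), d (κ ∘ τ) = d κ)
    (h : ∀ u : σ → R, ∑ κ, (∏ i, u (κ i)) * d κ = 0) (κ₀ : ι → σ) : d κ₀ = 0 := by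
  classical
  let deg (κ : ι → σ) : σ →₀ ℕ := ∑ i, Finsupp.single (κ i) 1
  let P : MvPolynomial σ R := ∑ κ, MvPolynomial.monomial (deg κ) (d κ)
  have hP : P = 0 := MvPolynomial.funext fun u => by
    simp only [P, deg, MvPolynomial.monomial_sum_index, map_sum, map_mul, map_prod,
      MvPolynomial.eval_C, MvPolynomial.eval_monomial, Finsupp.prod_single_index, pow_zero, pow_one,
      one_mul, map_zero, ← h u, mul_comm (d _)]
  -- the coefficient of `X^(deg κ₀)` in `P` is `d κ₀` times the number of rearrangements of `κ₀`
  have hcoeff := congrArg (MvPolynomial.coeff (deg κ₀)) hP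
  have hfiber : ∀ κ ∈ Finset.univ.filter (deg · = deg κ₀), d κ = d κ₀ := by
    intro κ hκ
    obtain ⟨τ, rfl⟩ := exists_perm_eq_comp_of_sum_single_eq (Finset.mem_filter.1 hκ).2
    exact hd κ₀ τ
  rw [MvPolynomial.coeff_sum, MvPolynomial.coeff_zero] at hcoeff
  simp only [MvPolynomial.coeff_monomial] at hcoeff
  rw [← Finset.sum_filter, Finset.sum_congr rfl hfiber, Finset.sum_const, nsmul_eq_mul] at hcoeff
  refine (mul_eq_zero.1 hcoeff).resolve_left ?_
  exact_mod_cast (Finset.card_pos.2 ⟨κ₀, by simp⟩).ne'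

theorem eq_of_forall_sum_prod_mul_eq {d e : (ι → σ) → R}
    (hd : ∀ κ (τ : Equiv.Perm ι), d (κ ∘ τ) = d κ) (he : ∀ κ (τ : Equiv.Perm ι), e (κ ∘ τ) = e κ)
    (h : ∀ u : σ → R, ∑ κ, (∏ i, u (κ i)) * d κ = ∑ κ, (∏ i, u (κ i)) * e κ) : d = e :=
  funext fun κ₀ => sub_eq_zero.1 <|
    eq_zero_of_forall_sum_prod_mul_eq_zero (d := d - e) (fun κ τ => by simp [hd, he])
      (fun u => by simp [mul_sub, Finset.sum_sub_distrib, h u]) κ₀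

end Polarization

theorem sum_mul_prod_comp_perm {ι σ τ R : Type*} [Fintype ι] [DecidableEq ι] [Fintype σ]
    [CommSemiring R] {d : (ι → σ) → R} (hd : ∀ κ (e : Equiv.Perm ι), d (κ ∘ e) = d κ)
    (M : τ → σ → R) (κ : ι → τ) (e : Equiv.Perm ι) :
    ∑ κ', d κ' * ∏ i, M (κ (e i)) (κ' i) = ∑ κ', d κ' * ∏ i, M (κ i) (κ' i) := by
  refine Fintype.sum_equiv (e.arrowCongr (Equiv.refl σ)) _ _ fun κ' => ?_
  have he : e.arrowCongr (Equiv.refl σ) κ' ∘ e = κ' := by ext; simp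
  conv_lhs => rw [← he, hd]
  congr 1
  exact Equiv.prod_comp e fun i => M (κ i) (e.arrowCongr (Equiv.refl σ) κ' i)

theorem HasStrictFDerivAt.tendsto_inv_smul_sub {𝕜 E F α : Type*} [NontriviallyNormedField 𝕜]
    [NormedAddCommGroup E] [NormedSpace 𝕜 E] [NormedAddCommGroup F] [NormedSpace 𝕜 F]
    {ψ : E → F} {L : E →L[𝕜] F} {q : E} (hψ : HasStrictFDerivAt ψ L q) {l : Filter α}
    {a b : α → E} {s : α → 𝕜} {A : E} (hb : Tendsto b l (𝓝 q)) (hs : Tendsto s l (𝓝 0))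
    (hs0 : ∀ᶠ t in l, s t ≠ 0) (hab : Tendsto (fun t => (s t)⁻¹ • (a t - b t)) l (𝓝 A)) :
    Tendsto (fun t => (s t)⁻¹ • (ψ (a t) - ψ (b t))) l (𝓝 (L A)) := by
  have hsab : ∀ᶠ t in l, s t • (s t)⁻¹ • (a t - b t) = a t - b t :=
    hs0.mono fun t ht => smul_inv_smul₀ ht _
  have hab0 : Tendsto (fun t => a t - b t) l (𝓝 0) := by
    simpa using (hs.smul hab).congr' hsab
  have ha : Tendsto a l (𝓝 q) := by simpa using hb.add hab0
  have hO : (fun t => a t - b t) =O[l] s :=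
    ((isBigO_refl s l).smul (hab.isBigO_one 𝕜)).congr' hsab (by simp)
  have hrem : (fun t => ψ (a t) - ψ (b t) - L (a t - b t)) =o[l] s :=
    (hψ.isLittleO.comp_tendsto (ha.prodMk_nhds hb)).trans_isBigO hO
  have hlim := ((L.continuous.tendsto A).comp hab).add hrem.tendsto_inv_smul_nhds_zero
  rw [add_zero] at hlim
  refine hlim.congr fun t => ?_
  simp [smul_sub]

theorem HasDerivAt.tendsto_apply_div {𝕜 ι : Type*} [NontriviallyNormedField 𝕜] [Fintype ι]
    {γ : 𝕜 → ι → 𝕜} {v : ι → 𝕜} (hγ : HasDerivAt γ v 0) {k : ι} (hk : γ 0 k = 0) :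
    Tendsto (fun t => γ t k / t) (𝓝[≠] 0) (𝓝 (v k)) :=
  (((continuous_apply k).tendsto v).comp (hasDerivAt_iff_tendsto_slope.1 hγ)).congr fun t => by
    simp [slope_def_module, hk, div_eq_inv_mul]

/-- `X_f(x)` in the chart, evaluated on `v ⊗ ⋯ ⊗ v`; only the normal components `v^r`, `r < m`,
enter. -/
def leadingTerm {n m ν : ℕ} (hmn : m ≤ n) (G : Fin n → (Fin ν → Fin m) → Esp n → ℂ)
    (x v : Esp n) : Esp n :=
  fun j => ∑ κ, (∏ i, v (Fin.castLE hmn (κ i))) * G j κ x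

theorem tendsto_inv_pow_smul_sub_leadingTerm {n m ν : ℕ} (hmn : m ≤ n) {U : Set (Esp n)}
    (hU : IsOpen U) {F : Esp n → Esp n} {G : Fin n → (Fin ν → Fin m) → Esp n → ℂ}
    (hFG : ∀ x ∈ U, ∀ j : Fin n,
      F x j - x j = ∑ κ : Fin ν → Fin m, (∏ i, x (Fin.castLE hmn (κ i))) * G j κ x)
    {γ : ℂ → Esp n} {v x : Esp n} (hγ : HasDerivAt γ v 0) (hγ0 : γ 0 = x) (hxU : x ∈ U)
    (hxS : x ∈ sliceSet n m) (hG : ∀ j κ, ContinuousAt (G j κ) x) :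
    Tendsto (fun t : ℂ => (t ^ ν)⁻¹ • (F (γ t) - γ t)) (𝓝[≠] 0) (𝓝 (leadingTerm hmn G x v)) := by
  subst hγ0
  have hγx : Tendsto γ (𝓝[≠] 0) (𝓝 (γ 0)) :=
    hγ.continuousAt.tendsto.mono_left nhdsWithin_le_nhds
  have hslope (r : Fin m) : Tendsto (fun t => γ t (Fin.castLE hmn r) / t) (𝓝[≠] 0)
      (𝓝 (v (Fin.castLE hmn r))) :=
    hγ.tendsto_apply_div (hxS _ (by simp))
  have hexp : (fun t : ℂ => fun j => ∑ κ : Fin ν → Fin m,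
      (∏ i, γ t (Fin.castLE hmn (κ i)) / t) * G j κ (γ t))
        =ᶠ[𝓝[≠] 0] fun t => (t ^ ν)⁻¹ • (F (γ t) - γ t) := by
    filter_upwards [hγx.eventually (hU.mem_nhds hxU)] with t htU
    funext j
    rw [Pi.smul_apply, Pi.sub_apply, hFG _ htU j, smul_eq_mul, Finset.mul_sum]
    refine Finset.sum_congr rfl fun κ _ => ?_
    rw [Finset.prod_div_distrib, Finset.prod_const, Finset.card_univ, Fintype.card_fin]
    ring
  refine (tendsto_pi_nhds.2 fun j => ?_).congr' hexp
  exact tendsto_finsetSum _ fun κ _ =>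
    (tendsto_finsetProd _ fun i _ => hslope (κ i)).mul ((hG j κ).tendsto.comp hγx)

theorem leadingTerm_eq_apply_leadingTerm {n m ν : ℕ} (hmn : m ≤ n) (hν : 1 ≤ ν)
    {U V : Set (Esp n)} (hU : IsOpen U) (hV : IsOpen V) {φ ψ f : Esp n → Esp n}
    {Lφ Lψ : Esp n →L[ℂ] Esp n} {g ghat : Fin n → (Fin ν → Fin m) → Esp n → ℂ} {p : Esp n}
    (hpU : p ∈ U) (hpS : p ∈ sliceSet n m) (hφpS : φ p ∈ sliceSet n m)
    (hφ : HasFDerivAt φ Lφ p) (hψ : HasStrictFDerivAt ψ Lψ (φ p))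
    (hφV : Set.MapsTo φ U V) (hψφ : ∀ x ∈ U, ψ (φ x) = x) (hfU : Set.MapsTo f U U)
    (hg : ∀ j κ, ContinuousAt (g j κ) p) (hghat : ∀ j κ, ContinuousAt (ghat j κ) (φ p))
    (hfg : ∀ x ∈ U, ∀ j : Fin n,
      f x j - x j = ∑ κ : Fin ν → Fin m, (∏ i, x (Fin.castLE hmn (κ i))) * g j κ x)
    (hfghat : ∀ w ∈ V, ∀ j : Fin n,
      φ (f (ψ w)) j - w j = ∑ κ : Fin ν → Fin m, (∏ i, w (Fin.castLE hmn (κ i))) * ghat j κ w)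
    (v : Esp n) :
    leadingTerm hmn g p v = Lψ (leadingTerm hmn ghat (φ p) (Lφ v)) := by
  set c : ℂ → Esp n := fun t => p + t • v
  have hc : HasDerivAt c v 0 :=
    (((hasDerivAt_id (0 : ℂ)).smul_const v).const_add p).congr_deriv (one_smul ℂ v)
  have hc0 : c 0 = p := by simp [c]
  have hw : HasDerivAt (φ ∘ c) (Lφ v) 0 := (hc0 ▸ hφ).comp_hasDerivAt 0 hc
  have hcU : ∀ᶠ t in 𝓝[≠] 0, c t ∈ U :=
    (hc.continuousAt.eventually (hU.mem_nhds (hc0 ▸ hpU))).filter_mono nhdsWithin_le_nhds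
  have hlim := tendsto_inv_pow_smul_sub_leadingTerm hmn hU hfg hc hc0 hpU hpS hg
  have hlimhat := tendsto_inv_pow_smul_sub_leadingTerm hmn hV hfghat hw (by simp [hc0])
    (hφV hpU) hφpS hghat
  have hwp : Tendsto (φ ∘ c) (𝓝[≠] 0) (𝓝 (φ p)) :=
    hc0 ▸ hw.continuousAt.tendsto.mono_left nhdsWithin_le_nhds
  have hpow : Tendsto (fun t : ℂ => t ^ ν) (𝓝[≠] 0) (𝓝 0) := by
    simpa [zero_pow (Nat.one_le_iff_ne_zero.1 hν)] using
      ((continuous_pow ν).tendsto (0 : ℂ)).mono_left nhdsWithin_le_nhds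
  have hpow0 : ∀ᶠ t : ℂ in 𝓝[≠] 0, t ^ ν ≠ 0 :=
    eventually_mem_nhdsWithin.mono fun _ => pow_ne_zero ν
  refine tendsto_nhds_unique hlim ((hψ.tendsto_inv_smul_sub hwp hpow hpow0 hlimhat).congr' ?_)
  filter_upwards [hcU] with t ht
  simp only [Function.comp_apply, hψφ _ ht, hψφ _ (hfU ht)]

def normalVector {n m : ℕ} (hmn : m ≤ n) (u : Fin m → ℂ) : Esp n :=
  ∑ s, u s • Pi.single (Fin.castLE hmn s) 1

theorem normalVector_castLE {n m : ℕ} (hmn : m ≤ n) (u : Fin m → ℂ) (s : Fin m) :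
    normalVector hmn u (Fin.castLE hmn s) = u s := by
  simp [normalVector, Finset.sum_apply, Pi.single_apply, Fin.castLE_inj]

theorem leadingTerm_normalVector {n m ν : ℕ} (hmn : m ≤ n)
    (G : Fin n → (Fin ν → Fin m) → Esp n → ℂ) (x : Esp n) (u : Fin m → ℂ) (j : Fin n) :
    leadingTerm hmn G x (normalVector hmn u) j = ∑ κ, (∏ i, u (κ i)) * G j κ x := by
  simp only [leadingTerm, normalVector_castLE]

theorem apply_leadingTerm_apply_normalVector {n m ν : ℕ} (hmn : m ≤ n)
    (L M : Esp n →L[ℂ] Esp n) (G : Fin n → (Fin ν → Fin m) → Esp n → ℂ) (q : Esp n)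
    (u : Fin m → ℂ) (h : Fin n) :
    M (leadingTerm hmn G q (L (normalVector hmn u))) h =
      ∑ κ : Fin ν → Fin m, (∏ i, u (κ i)) *
        ∑ j, ∑ κ' : Fin ν → Fin m, M (Pi.single j 1) h * G j κ' q *
          ∏ i, L (Pi.single (Fin.castLE hmn (κ i)) 1) (Fin.castLE hmn (κ' i)) := by
  have hL (r : Fin n) :
      L (normalVector hmn u) r = ∑ s, u s * L (Pi.single (Fin.castLE hmn s) 1) r := by
    simp [normalVector, map_sum, map_smul]
  have hM (X : Esp n) : M X h = ∑ j, X j * M (Pi.single j 1) h := by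
    conv_lhs => rw [← Finset.univ_sum_single X]
    refine (map_sum M _ _ ▸ Finset.sum_apply h _ _).trans (Finset.sum_congr rfl fun j _ => ?_)
    rw [← smul_eq_mul, ← Pi.smul_apply, ← map_smul, ← Pi.single_smul', smul_eq_mul, mul_one]
  rw [hM]
  simp only [leadingTerm, hL, Fintype.prod_sum, Finset.prod_mul_distrib, Finset.sum_mul,
    Finset.mul_sum]
  conv_rhs => rw [Finset.sum_comm]
  refine Finset.sum_congr rfl fun j _ => ?_
  conv_rhs => rw [Finset.sum_comm]
  exact Finset.sum_congr rfl fun κ' _ => Finset.sum_congr rfl fun κ _ => by ring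

theorem statement_8_general {n m : ℕ} (hmn : m < n) (ν : ℕ) (hν : 1 ≤ ν)
    (U V : Set (Esp n)) (hU : IsOpen U) (hV : IsOpen V)
    (φ ψ : Esp n → Esp n) (hφa : AnalyticOnNhd ℂ φ U) (hψa : AnalyticOnNhd ℂ ψ V)
    (hφV : Set.MapsTo φ U V)
    (hψφ : ∀ x ∈ U, ψ (φ x) = x)
    (hφS : ∀ x ∈ U ∩ sliceSet n m, φ x ∈ sliceSet n m)
    (f : Esp n → Esp n) (hfU : Set.MapsTo f U U)
    (g ghat : Fin n → (Fin ν → Fin m) → Esp n → ℂ)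
    (hga : ∀ j κ, AnalyticOnNhd ℂ (g j κ) U)
    (hghata : ∀ j κ, AnalyticOnNhd ℂ (ghat j κ) V)
    (hgsym : ∀ j κ (σ : Equiv.Perm (Fin ν)), g j (κ ∘ σ) = g j κ)
    (hghatsym : ∀ j κ (σ : Equiv.Perm (Fin ν)), ghat j (κ ∘ σ) = ghat j κ)
    (hfg : ∀ x ∈ U, ∀ j : Fin n,
      f x j - x j = ∑ κ : Fin ν → Fin m,
        (∏ i, x (Fin.castLE hmn.le (κ i))) * g j κ x)
    (hfghat : ∀ w ∈ V, ∀ j : Fin n,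
      φ (f (ψ w)) j - w j = ∑ κ : Fin ν → Fin m,
        (∏ i, w (Fin.castLE hmn.le (κ i))) * ghat j κ w) :
    ∀ p ∈ U ∩ sliceSet n m, ∀ (h : Fin n) (κ : Fin ν → Fin m),
      g h κ p =
        ∑ j : Fin n, ∑ κ' : Fin ν → Fin m,
          (fderiv ℂ ψ (φ p) (Pi.single j 1) h) * ghat j κ' (φ p) *
            ∏ i, (fderiv ℂ φ p (Pi.single (Fin.castLE hmn.le (κ i)) 1)
                    (Fin.castLE hmn.le (κ' i))) := by
  intro p hp h
  set G : (Fin ν → Fin m) → ℂ := fun κ => ∑ j : Fin n, ∑ κ' : Fin ν → Fin m,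
    fderiv ℂ ψ (φ p) (Pi.single j 1) h * ghat j κ' (φ p) *
      ∏ i, fderiv ℂ φ p (Pi.single (Fin.castLE hmn.le (κ i)) 1) (Fin.castLE hmn.le (κ' i))
  have hφpV : φ p ∈ V := hφV hp.1
  have hchart := leadingTerm_eq_apply_leadingTerm hmn.le hν hU hV hp.1 hp.2 (hφS p hp)
    (hφa p hp.1).differentiableAt.hasFDerivAt (hψa _ hφpV).hasStrictFDerivAt hφV hψφ hfU
    (fun j κ => (hga j κ p hp.1).continuousAt) (fun j κ => (hghata j κ _ hφpV).continuousAt)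
    hfg hfghat
  have hpoly (u : Fin m → ℂ) : ∑ κ, (∏ i, u (κ i)) * g h κ p = ∑ κ, (∏ i, u (κ i)) * G κ := by
    rw [← leadingTerm_normalVector, ← apply_leadingTerm_apply_normalVector, hchart]
  have hGsym (κ : Fin ν → Fin m) (σ : Equiv.Perm (Fin ν)) : G (κ ∘ σ) = G κ :=
    Finset.sum_congr rfl fun j _ =>
      sum_mul_prod_comp_perm (d := fun κ' => fderiv ℂ ψ (φ p) (Pi.single j 1) h * ghat j κ' (φ p))
        (fun κ' σ' => by rw [hghatsym])
        (fun r s => fderiv ℂ φ p (Pi.single (Fin.castLE hmn.le r) 1) (Fin.castLE hmn.le s)) κ σ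
  exact congrFun (eq_of_forall_sum_prod_mul_eq (fun κ σ => congrFun (hgsym h κ σ) p) hGsym hpoly)

theorem statement_8 {n m : ℕ} (hm : 0 < m) (hmn : m < n) (ν : ℕ) (hν : 1 ≤ ν)
    (U V : Set (Esp n)) (hU : IsOpen U) (hV : IsOpen V)
    (φ ψ : Esp n → Esp n) (hφa : AnalyticOnNhd ℂ φ U) (hψa : AnalyticOnNhd ℂ ψ V)
    (hφV : Set.MapsTo φ U V) (hψU : Set.MapsTo ψ V U)
    (hψφ : ∀ x ∈ U, ψ (φ x) = x) (hφψ : ∀ w ∈ V, φ (ψ w) = w)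
    (hφS : ∀ x ∈ U ∩ sliceSet n m, φ x ∈ sliceSet n m)
    (hψS : ∀ w ∈ V ∩ sliceSet n m, ψ w ∈ sliceSet n m)
    (f : Esp n → Esp n) (hfa : AnalyticOnNhd ℂ f U) (hfU : Set.MapsTo f U U)
    (hfix : ∀ x ∈ U ∩ sliceSet n m, f x = x)
    (g ghat : Fin n → (Fin ν → Fin m) → Esp n → ℂ)
    (hga : ∀ j κ, AnalyticOnNhd ℂ (g j κ) U)
    (hghata : ∀ j κ, AnalyticOnNhd ℂ (ghat j κ) V)
    (hgsym : ∀ j κ (σ : Equiv.Perm (Fin ν)), g j (κ ∘ σ) = g j κ)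
    (hghatsym : ∀ j κ (σ : Equiv.Perm (Fin ν)), ghat j (κ ∘ σ) = ghat j κ)
    (hfg : ∀ x ∈ U, ∀ j : Fin n,
      f x j - x j = ∑ κ : Fin ν → Fin m,
        (∏ i, x (Fin.castLE hmn.le (κ i))) * g j κ x)
    (hfghat : ∀ w ∈ V, ∀ j : Fin n,
      φ (f (ψ w)) j - w j = ∑ κ : Fin ν → Fin m,
        (∏ i, w (Fin.castLE hmn.le (κ i))) * ghat j κ w) :
    ∀ p ∈ U ∩ sliceSet n m, ∀ (h : Fin n) (κ : Fin ν → Fin m),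
      g h κ p =
        ∑ j : Fin n, ∑ κ' : Fin ν → Fin m,
          (fderiv ℂ ψ (φ p) (Pi.single j 1) h) * ghat j κ' (φ p) *
            ∏ i, (fderiv ℂ φ p (Pi.single (Fin.castLE hmn.le (κ i)) 1)
                    (Fin.castLE hmn.le (κ' i))) :=
  statement_8_general hmn ν hν U V hU hV φ ψ hφa hψa hφV hψφ hφS f hfU g ghat hga hghata hgsym
    hghatsym hfg hfghat
end

section
/- In an adapted chart where the Camacho-Sad action along X_f on the normal bundle of a smooth hypersurface S is written X̃_f(∂_1)(∂_1^{⊗ν_f}) = M_f ∂_1, one has M_f = −(∂g^1/∂z^1)|_S; and if f is tangential, writing g^1 = z^1 h^1, one has M_f = −h^1|_S. -/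
open Filter Topology

/-- The Lie bracket of two (holomorphic) vector fields on `ℂ^n`. -/
noncomputable def lieB {n : ℕ} (V W : Esp n → Esp n) (x : Esp n) : Esp n :=
  fderiv ℂ W x (V x) - fderiv ℂ V x (W x)

/-!
`z^1` is the coordinate `x 0`, so `S ∩ U = {x ∈ U | x 0 = 0}`, and `M_f` is the `0`-th
component of `[∑_j g^j ∂/∂z^j, ∂/∂z^1]` on `S`. Since `∂/∂z^1` is a constant field, this bracket
is `-D𝒳(∂/∂z^1)`, whose `0`-th component is `-∂g^1/∂z^1`; by the product rule for `z^1 h^1`,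
this derivative equals `h^1` where `z^1 = 0`.
-/

lemma lieB_const_right {n : ℕ} {V : Esp n → Esp n} (c : Esp n) (x : Esp n) :
    lieB V (fun _ => c) x = -fderiv ℂ V x c := by
  simp [lieB]

lemma fderiv_pi_apply_apply {n : ℕ} {g : Fin n → Esp n → ℂ} {x : Esp n}
    (hg : ∀ j, DifferentiableAt ℂ (g j) x) (v : Esp n) (i : Fin n) :
    fderiv ℂ (fun y j => g j y) x v i = fderiv ℂ (g i) x v := by
  simp [fderiv_pi hg]

lemma fderiv_coord_mul_apply {n : ℕ} {h : Esp n → ℂ} {x : Esp n}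
    (hh : DifferentiableAt ℂ h x) (i : Fin n) (v : Esp n) :
    fderiv ℂ (fun y => y i * h y) x v = x i * fderiv ℂ h x v + h x * v i := by
  rw [((hasFDerivAt_apply i x).fun_mul hh.hasFDerivAt).fderiv]
  simp

theorem statement_12_general {n : ℕ} [NeZero n]
    (U : Set (Esp n)) (hU : IsOpen U)
    (g : Fin n → Esp n → ℂ) (h : Esp n → ℂ)
    (hga : ∀ j, AnalyticOnNhd ℂ (g j) U) (hha : AnalyticOnNhd ℂ h U)
    (htang : ∀ x ∈ U, g 0 x = x 0 * h x) :
    ∀ x ∈ U, x 0 = 0 →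
      (lieB (fun y => fun j => g j y) (fun _ => Pi.single (0 : Fin n) 1) x) 0 =
          -(fderiv ℂ (g 0) x) (Pi.single (0 : Fin n) 1) ∧
      (lieB (fun y => fun j => g j y) (fun _ => Pi.single (0 : Fin n) 1) x) 0 = -h x := by
  intro x hx hx0
  have hbracket : (lieB (fun y => fun j => g j y) (fun _ => Pi.single (0 : Fin n) 1) x) 0 =
      -(fderiv ℂ (g 0) x) (Pi.single (0 : Fin n) 1) := by
    rw [lieB_const_right, Pi.neg_apply,
      fderiv_pi_apply_apply fun j => (hga j x hx).differentiableAt]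
  have hg0 : g 0 =ᶠ[𝓝 x] fun y => y 0 * h y :=
    eventually_of_mem (hU.mem_nhds hx) htang
  refine ⟨hbracket, ?_⟩
  rw [hbracket, hg0.fderiv_eq, fderiv_coord_mul_apply (hha x hx).differentiableAt]
  simp [hx0]

theorem statement_12 {n : ℕ} [NeZero n] (hn : 2 ≤ n) (ν : ℕ) (hν : 1 ≤ ν)
    (U : Set (Esp n)) (hU : IsOpen U)
    (f : Esp n → Esp n) (hfa : AnalyticOnNhd ℂ f U)
    (hfix : ∀ x ∈ U, x 0 = 0 → f x = x)
    (g : Fin n → Esp n → ℂ) (h : Esp n → ℂ)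
    (hga : ∀ j, AnalyticOnNhd ℂ (g j) U) (hha : AnalyticOnNhd ℂ h U)
    (hfg : ∀ x ∈ U, ∀ j : Fin n, f x j - x j = g j x * (x 0) ^ ν)
    (htang : ∀ x ∈ U, g 0 x = x 0 * h x) :
    ∀ x ∈ U, x 0 = 0 →
      (lieB (fun y => fun j => g j y) (fun _ => Pi.single (0 : Fin n) 1) x) 0 =
          -(fderiv ℂ (g 0) x) (Pi.single (0 : Fin n) 1) ∧
      (lieB (fun y => fun j => g j y) (fun _ => Pi.single (0 : Fin n) 1) x) 0 = -h x :=
  statement_12_general U hU g h hga hha htang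
end

section
/- Let S be a hypersurface in M and f ∈ End(M,S) tangential with X_f ≢ 0, S^0 = S \ Sing(X_f), and Q_f = T_S / X_f(N_S^{⊗ν_f}) with projection π_f: T_S → Q_f. Then B̃(s)(u) = π_f([X_f(u), s̃]), for s̃ ∈ T_S with π_f(s̃) = s, is well-defined (independent of the lift s̃) and is a holomorphic action of N_S^{⊗ν_f} on the virtual bundle TS − N_S^{⊗ν_f} along X_f (a Baum-Bott action). -/
open Filter Topology

section LieBracket

variable {n : ℕ} {V W W' : Esp n → Esp n} {φ : Esp n → ℂ} {x : Esp n}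

theorem lieB_congr_right (hWW' : W =ᶠ[𝓝 x] W') : lieB V W x = lieB V W' x := by
  simp only [lieB, hWW'.fderiv_eq, hWW'.eq_of_nhds]

theorem lieB_add_right (hW : DifferentiableAt ℂ W x) (hW' : DifferentiableAt ℂ W' x) :
    lieB V (fun y => W y + W' y) x = lieB V W x + lieB V W' x := by
  simp only [lieB, fderiv_fun_add hW hW', add_apply, map_add]
  abel

theorem lieB_smul_right (hφ : DifferentiableAt ℂ φ x) (hW : DifferentiableAt ℂ W x) :
    lieB V (fun y => φ y • W y) x = fderiv ℂ φ x (V x) • W x + φ x • lieB V W x := by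
  simp only [lieB, fderiv_fun_smul hφ hW, add_apply,
    smul_apply, ContinuousLinearMap.smulRight_apply, smul_sub, map_smul]
  abel

theorem lieB_smul_left_self (hφ : DifferentiableAt ℂ φ x) (hV : DifferentiableAt ℂ V x) :
    lieB (fun y => φ y • V y) V x = -fderiv ℂ φ x (V x) • V x := by
  simp only [lieB, fderiv_fun_smul hφ hV, add_apply,
    smul_apply, ContinuousLinearMap.smulRight_apply, map_smul]
  module

/-- `[uG, ρG] = (uG)(ρ) G - ρ G(u) G`, because `[uG, G] = -G(u) G`. -/
theorem lieB_smul_sub_lieB_smul_of_sub_eq_smul {u ρ : Esp n → ℂ} {G Z Z' : Esp n → Esp n}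
    (hu : DifferentiableAt ℂ u x) (hρ : DifferentiableAt ℂ ρ x)
    (hG : DifferentiableAt ℂ G x) (hZ' : DifferentiableAt ℂ Z' x)
    (hZZ' : ∀ᶠ y in 𝓝 x, Z y - Z' y = ρ y • G y) :
    lieB (fun y => u y • G y) Z x - lieB (fun y => u y • G y) Z' x =
      (fderiv ℂ ρ x (u x • G x) - ρ x * fderiv ℂ u x (G x)) • G x := by
  have hZ : Z =ᶠ[𝓝 x] fun y => Z' y + ρ y • G y :=
    hZZ'.mono fun y hy => sub_eq_iff_eq_add'.mp hy
  rw [lieB_congr_right hZ, lieB_add_right hZ' (hρ.fun_smul hG), add_sub_cancel_left,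
    lieB_smul_right hρ hG, lieB_smul_left_self hu hG]
  module

end LieBracket

theorem statement_13_general {n : ℕ} [NeZero n]
    (U : Set (Esp n)) (hU : IsOpen U)
    (g : Fin n → Esp n → ℂ)
    (hga : ∀ j, AnalyticOnNhd ℂ (g j) U) :
    -- (1) the bracket is well defined on sections of `Q_f = T_S/X_f(N_S^{⊗ν})`:
    (∀ (u ρ : Esp n → ℂ) (Z Z' : Esp n → Esp n),
      AnalyticOnNhd ℂ u U → AnalyticOnNhd ℂ ρ U →
      AnalyticOnNhd ℂ Z U → AnalyticOnNhd ℂ Z' U →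
      (∀ x ∈ U, x 0 = 0 → Z x 0 = 0) → (∀ x ∈ U, x 0 = 0 → Z' x 0 = 0) →
      (∀ x ∈ U, Z x - Z' x = ρ x • (fun j => g j x)) →
      ∀ x ∈ U, x 0 = 0 → (∃ j, g j x ≠ 0) →
        ∃ c : ℂ,
          lieB (fun y => u y • (fun j => g j y)) Z x -
            lieB (fun y => u y • (fun j => g j y)) Z' x = c • (fun j => g j x)) ∧
    -- (2) the Leibniz rule modulo the image:
    (∀ (u G₀ : Esp n → ℂ) (Z : Esp n → Esp n),
      AnalyticOnNhd ℂ u U → AnalyticOnNhd ℂ G₀ U → AnalyticOnNhd ℂ Z U →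
      (∀ x ∈ U, x 0 = 0 → Z x 0 = 0) →
      ∀ x ∈ U, x 0 = 0 → (∃ j, g j x ≠ 0) →
        ∃ c : ℂ,
          lieB (fun y => u y • (fun j => g j y)) (fun y => G₀ y • Z y) x -
            (fderiv ℂ G₀ x (u x • (fun j => g j x))) • Z x -
            G₀ x • lieB (fun y => u y • (fun j => g j y)) Z x = c • (fun j => g j x)) := by
  have hG : ∀ x ∈ U, DifferentiableAt ℂ (fun y j => g j y) x := fun x hx =>
    differentiableAt_pi.2 fun j => (hga j x hx).differentiableAt
  constructor
  · intro u ρ Z Z' hu hρ _ hZ' _ _ hZZ' x hx _ _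
    exact ⟨_, lieB_smul_sub_lieB_smul_of_sub_eq_smul (hu x hx).differentiableAt
      (hρ x hx).differentiableAt (hG x hx) (hZ' x hx).differentiableAt
      (eventually_of_mem (hU.mem_nhds hx) (hZZ' · ·))⟩
  · intro u G₀ Z _ hG₀ hZ _ x hx _ _
    refine ⟨0, ?_⟩
    rw [lieB_smul_right (hG₀ x hx).differentiableAt (hZ x hx).differentiableAt,
      add_sub_cancel_left, sub_self, zero_smul]

theorem statement_13 {n : ℕ} [NeZero n] (hn : 2 ≤ n) (ν : ℕ) (hν : 1 ≤ ν)
    (U : Set (Esp n)) (hU : IsOpen U)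
    (f : Esp n → Esp n) (hfa : AnalyticOnNhd ℂ f U)
    (hfix : ∀ x ∈ U, x 0 = 0 → f x = x)
    (g : Fin n → Esp n → ℂ) (h : Esp n → ℂ)
    (hga : ∀ j, AnalyticOnNhd ℂ (g j) U) (hha : AnalyticOnNhd ℂ h U)
    (hfg : ∀ x ∈ U, ∀ j : Fin n, f x j - x j = g j x * (x 0) ^ ν)
    (htang : ∀ x ∈ U, g 0 x = x 0 * h x)
    (hXne : ∃ x ∈ U, x 0 = 0 ∧ ∃ j, g j x ≠ 0) :
    -- (1) the bracket is well defined on sections of `Q_f = T_S/X_f(N_S^{⊗ν})`: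
    (∀ (u ρ : Esp n → ℂ) (Z Z' : Esp n → Esp n),
      AnalyticOnNhd ℂ u U → AnalyticOnNhd ℂ ρ U →
      AnalyticOnNhd ℂ Z U → AnalyticOnNhd ℂ Z' U →
      (∀ x ∈ U, x 0 = 0 → Z x 0 = 0) → (∀ x ∈ U, x 0 = 0 → Z' x 0 = 0) →
      (∀ x ∈ U, Z x - Z' x = ρ x • (fun j => g j x)) →
      ∀ x ∈ U, x 0 = 0 → (∃ j, g j x ≠ 0) →
        ∃ c : ℂ,
          lieB (fun y => u y • (fun j => g j y)) Z x -
            lieB (fun y => u y • (fun j => g j y)) Z' x = c • (fun j => g j x)) ∧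
    -- (2) the Leibniz rule modulo the image:
    (∀ (u G₀ : Esp n → ℂ) (Z : Esp n → Esp n),
      AnalyticOnNhd ℂ u U → AnalyticOnNhd ℂ G₀ U → AnalyticOnNhd ℂ Z U →
      (∀ x ∈ U, x 0 = 0 → Z x 0 = 0) →
      ∀ x ∈ U, x 0 = 0 → (∃ j, g j x ≠ 0) →
        ∃ c : ℂ,
          lieB (fun y => u y • (fun j => g j y)) (fun y => G₀ y • Z y) x -
            (fderiv ℂ G₀ x (u x • (fun j => g j x))) • Z x -
            G₀ x • lieB (fun y => u y • (fun j => g j y)) Z x = c • (fun j => g j x)) :=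
  statement_13_general U hU g hga
end
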